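/- Let G be a finite simple graph, M a maximum matching of G, and H a subgraph of G with M ⊆ E(H) such that every connected component of H is either a single edge belonging to M, or a path p1–p2–p3–p4–p5 on 5 vertices whose end edges {p1,p2} and {p4,p5} belong to M and whose other edges do not belong to M. Suppose that H admits no augmenting triple. Let I denote the set of all internal non-middle vertices (i.e. the second and fourth vertices) of the 5-path components of H. Then for every edge component e = {v,w} of H and every vertex u ∈ V(G) \ V(H) with {u,v} ∈ E(G): every neighbor of u in G lies in {v, w} ∪ I, and every neighbor of w in G lies in {v, u} ∪ I. -/

import Mathlib

open SimpleGraph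

/-- Degree of a vertex in a subgraph, via `Set.ncard` of the neighbor set. -/
noncomputable def subDeg {V : Type*} {G : SimpleGraph V} (H : G.Subgraph) (v : V) : ℕ :=
  (H.neighborSet v).ncard

/-- A subgraph is a path: it is a single vertex, or it is connected with exactly two
vertices of degree 1 and all other vertices of degree 2. -/
def IsPathSubgraph {V : Type*} {G : SimpleGraph V} (P : G.Subgraph) : Prop :=
  P.Connected ∧
  ((∃ v, P.verts = {v}) ∨
    (({v ∈ P.verts | subDeg P v = 1}).ncard = 2 ∧
      ∀ v ∈ P.verts, subDeg P v = 1 ∨ subDeg P v = 2))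

/-- `x` is an endpoint of the path subgraph `P` (for paths of order at least 2). -/
def IsPathEndpoint {V : Type*} {G : SimpleGraph V} (P : G.Subgraph) (x : V) : Prop :=
  x ∈ P.verts ∧ subDeg P x = 1

/-- A matching of `G`: a finite set of edges of `G`, no two of which share an endpoint. -/
def IsMatchingSet {V : Type*} (G : SimpleGraph V) (M : Finset (Sym2 V)) : Prop :=
  ↑M ⊆ G.edgeSet ∧ ∀ e ∈ M, ∀ f ∈ M, e ≠ f → ∀ v : V, v ∈ e → v ∉ f

/-- A maximum matching of `G`. -/
def IsMaxMatchingSet {V : Type*} (G : SimpleGraph V) (M : Finset (Sym2 V)) : Prop :=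
  IsMatchingSet G M ∧ ∀ M' : Finset (Sym2 V), IsMatchingSet G M' → M'.card ≤ M.card

/-- There is a collection of vertex-disjoint path subgraphs of `G`, each of order at
least 4, whose total number of vertices `n` satisfies `p n`. -/
def HasDisjointPathsCovering {V : Type*} (G : SimpleGraph V) (p : ℕ → Prop) : Prop :=
  ∃ Ps : Set G.Subgraph,
    (∀ P ∈ Ps, IsPathSubgraph P ∧ 4 ≤ P.verts.ncard) ∧
    (Ps.Pairwise fun P Q => Disjoint P.verts Q.verts) ∧
    p ((⋃ P ∈ Ps, P.verts).ncard)

/-- There is a collection of vertex-disjoint path subgraphs of `G`, each of order at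
least 4, covering at least `N` vertices in total. -/
def HasDisjointPathCover {V : Type*} (G : SimpleGraph V) (N : ℕ) : Prop :=
  HasDisjointPathsCovering G fun n => N ≤ n

/-- `opt G`: the maximum total number of vertices in a collection of vertex-disjoint
paths of `G`, each of order at least 4. -/
noncomputable def optValue {V : Type*} (G : SimpleGraph V) : ℕ :=
  sSup {n : ℕ |
    ∃ Ps : Set G.Subgraph,
      (∀ P ∈ Ps, IsPathSubgraph P ∧ 4 ≤ P.verts.ncard) ∧
      (Ps.Pairwise fun P Q => Disjoint P.verts Q.verts) ∧
      n = (⋃ P ∈ Ps, P.verts).ncard}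

/-- Degree of a vertex in the spanning subgraph determined by an edge set `F`. -/
noncomputable def edgeDeg {W : Type*} (F : Set (Sym2 W)) (v : W) : ℕ :=
  {e ∈ F | v ∈ e}.ncard

/-- An edge set `C` saturates a vertex set `B` if some edge of `C` has an endpoint in `B`. -/
def Saturates {W : Type*} (C : Set (Sym2 W)) (B : Set W) : Prop :=
  ∃ e ∈ C, ∃ v ∈ B, v ∈ e

/-- The connected component of `v` in the subgraph `H`, as a set of vertices. -/
def Hcomp {V : Type*} {G : SimpleGraph V} (H : G.Subgraph) (v : V) : Set V :=
  {u | Relation.ReflTransGen H.Adj v u}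

/-- The connected component of `a` in `H` is the single edge `{a, b}`. -/
def IsEdgeComp {V : Type*} {G : SimpleGraph V} (H : G.Subgraph) (a b : V) : Prop :=
  H.Adj a b ∧ Hcomp H a = {a, b}

/-- The connected component of `p 0` in `H` is the 5-path `p 0 – p 1 – p 2 – p 3 – p 4`,
whose end edges belong to `M` and whose other edges do not. -/
def Is5PathComp {V : Type*} [DecidableEq V] {G : SimpleGraph V} (H : G.Subgraph)
    (M : Finset (Sym2 V)) (p : Fin 5 → V) : Prop :=
  Function.Injective p ∧
  (∀ i : Fin 4, H.Adj (p i.castSucc) (p i.succ)) ∧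
  Hcomp H (p 0) = Set.range p ∧
  (∀ u v : V, u ∈ Set.range p → v ∈ Set.range p → H.Adj u v →
    ∃ i : Fin 4, (u = p i.castSucc ∧ v = p i.succ) ∨ (u = p i.succ ∧ v = p i.castSucc)) ∧
  s(p 0, p 1) ∈ M ∧ s(p 3, p 4) ∈ M ∧ s(p 1, p 2) ∉ M ∧ s(p 2, p 3) ∉ M

/-- `H` admits an augmenting triple. -/
def HasAugTriple {V : Type*} [DecidableEq V] (G : SimpleGraph V) (H : G.Subgraph) :
    Prop :=
  ∃ u0 v0 w0 v1 w1 : V, u0 ∉ H.verts ∧ IsEdgeComp H v0 w0 ∧ IsEdgeComp H v1 w1 ∧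
    s(v0, w0) ≠ s(v1, w1) ∧
    ((G.Adj u0 v0 ∧ G.Adj u0 v1) ∨ (G.Adj u0 v0 ∧ G.Adj w0 v1))


/-!
A neighbour of `u` or of `w` outside `{v, w} ∪ I` (resp. `{v, u} ∪ I`) lies outside `H`, in
another edge component, or at `p 0`, `p 2` or `p 4` of a 5-path component. An edge component
gives an augmenting triple; every other case gives an `M`-augmenting path of length 1, 3 or 5
(the longest being `u – v = w – p 0 = p 1 – p 2`), contradicting maximality. Augmenting paths
are ruled out one exchange at a time: trading the matched edge `ab` for `ca`, with `c`
unsaturated, keeps the matching maximum and leaves `b` unsaturated.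
-/
def IsUnsaturated {V : Type*} (M : Finset (Sym2 V)) (x : V) : Prop :=
  ∀ e ∈ M, x ∉ e

def pathInnerVerts {V : Type*} [DecidableEq V] {G : SimpleGraph V} (H : G.Subgraph)
    (M : Finset (Sym2 V)) : Set V :=
  {x | ∃ p : Fin 5 → V, Is5PathComp H M p ∧ (x = p 1 ∨ x = p 3)}

section Matching

variable {V : Type*} {G : SimpleGraph V} {M N : Finset (Sym2 V)} {a b c d e f x : V}

lemma IsUnsaturated.mono (hx : IsUnsaturated M x) (hNM : N ⊆ M) : IsUnsaturated N x :=
  fun e he => hx e (hNM he)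

lemma IsUnsaturated.ne_of_mem (hx : IsUnsaturated M x) {e : Sym2 V} (he : e ∈ M) (ha : a ∈ e) :
    x ≠ a := by
  rintro rfl
  exact hx e he ha

lemma IsUnsaturated.insert [DecidableEq V] (hx : IsUnsaturated M x) (hxa : x ≠ a)
    (hxb : x ≠ b) : IsUnsaturated (insert s(a, b) M) x := by
  intro e he hxe
  rcases Finset.mem_insert.1 he with rfl | he
  · rcases Sym2.mem_iff.1 hxe with rfl | rfl <;> contradiction
  · exact hx e he hxe

lemma IsMatchingSet.subset (hM : IsMatchingSet G M) (hNM : N ⊆ M) : IsMatchingSet G N :=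
  ⟨(Finset.coe_subset.2 hNM).trans hM.1, fun e he f hf => hM.2 e (hNM he) f (hNM hf)⟩

lemma IsMatchingSet.isUnsaturated_erase [DecidableEq V] (hM : IsMatchingSet G M)
    {e : Sym2 V} (he : e ∈ M) (hx : x ∈ e) : IsUnsaturated (M.erase e) x := fun f hf hxf =>
  hM.2 f (Finset.mem_of_mem_erase hf) e he (Finset.ne_of_mem_erase hf) x hxf hx

lemma IsMatchingSet.insert [DecidableEq V] (hM : IsMatchingSet G M) (hab : G.Adj a b)
    (ha : IsUnsaturated M a) (hb : IsUnsaturated M b) : IsMatchingSet G (insert s(a, b) M) := by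
  have hnew : ∀ f ∈ M, ∀ x ∈ s(a, b), x ∉ f := by
    intro f hf x hx
    rcases Sym2.mem_iff.1 hx with rfl | rfl
    exacts [ha f hf, hb f hf]
  refine ⟨?_, ?_⟩
  · rw [Finset.coe_insert]
    exact Set.insert_subset hab hM.1
  · intro e he f hf hef x hxe hxf
    rcases Finset.mem_insert.1 he with rfl | he <;> rcases Finset.mem_insert.1 hf with rfl | hf
    · exact hef rfl
    · exact hnew f hf x hxe hxf
    · exact hnew e he x hxf hxe
    · exact hM.2 e he f hf hef x hxe hxf

lemma IsMaxMatchingSet.not_adj [DecidableEq V] (hM : IsMaxMatchingSet G M)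
    (ha : IsUnsaturated M a) (hb : IsUnsaturated M b) : ¬ G.Adj a b := by
  intro hab
  have hcard := hM.2 _ (hM.1.insert hab ha hb)
  rw [Finset.card_insert_of_notMem fun h => ha _ h (Sym2.mem_mk_left a b)] at hcard
  omega

lemma IsMaxMatchingSet.exchange [DecidableEq V] (hM : IsMaxMatchingSet G M)
    (hab : s(a, b) ∈ M) (hc : IsUnsaturated M c) (hca : G.Adj c a) :
    IsMaxMatchingSet G (insert s(c, a) (M.erase s(a, b))) ∧
      IsUnsaturated (insert s(c, a) (M.erase s(a, b))) b := by
  have herase : M.erase s(a, b) ⊆ M := Finset.erase_subset _ _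
  refine ⟨⟨(hM.1.subset herase).insert hca (hc.mono herase)
    (hM.1.isUnsaturated_erase hab (Sym2.mem_mk_left a b)), fun N hN => ?_⟩, ?_⟩
  · rw [Finset.card_insert_of_notMem fun h => hc.mono herase _ h (Sym2.mem_mk_left c a),
      Finset.card_erase_add_one hab]
    exact hM.2 N hN
  · exact (hM.1.isUnsaturated_erase hab (Sym2.mem_mk_right a b)).insert
      (hc.ne_of_mem hab (Sym2.mem_mk_right a b)).symm (G.ne_of_adj (hM.1.1 hab)).symm

lemma IsMaxMatchingSet.not_augmentingPath₃ [DecidableEq V] (hM : IsMaxMatchingSet G M)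
    (ha : IsUnsaturated M a) (hd : IsUnsaturated M d) (hbc : s(b, c) ∈ M) (hab : G.Adj a b)
    (hcd : G.Adj c d) (hda : d ≠ a) : False := by
  obtain ⟨hM', hc'⟩ := hM.exchange hbc ha hab
  exact hM'.not_adj hc' ((hd.mono (Finset.erase_subset _ _)).insert hda
    (hd.ne_of_mem hbc (Sym2.mem_mk_left b c))) hcd

lemma IsMaxMatchingSet.not_augmentingPath₅ [DecidableEq V] (hM : IsMaxMatchingSet G M)
    (ha : IsUnsaturated M a) (hf : IsUnsaturated M f) (hbc : s(b, c) ∈ M) (hde : s(d, e) ∈ M)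
    (hne : s(d, e) ≠ s(b, c)) (hab : G.Adj a b) (hcd : G.Adj c d) (hef : G.Adj e f)
    (hfa : f ≠ a) (hfc : f ≠ c) : False := by
  obtain ⟨hM', hc'⟩ := hM.exchange hbc ha hab
  exact hM'.not_augmentingPath₃ hc' ((hf.mono (Finset.erase_subset _ _)).insert hfa
    (hf.ne_of_mem hbc (Sym2.mem_mk_left b c)))
    (Finset.mem_insert_of_mem (Finset.mem_erase.2 ⟨hne, hde⟩)) hcd hef hfc

end Matching

section Components

variable {V : Type*} {G : SimpleGraph V} {H : G.Subgraph} {M : Finset (Sym2 V)} {a b c x : V}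

lemma hcomp_eq_of_reflTransGen (h : Relation.ReflTransGen H.Adj a b) :
    Hcomp H a = Hcomp H b := by
  have : Std.Symm H.Adj := ⟨fun _ _ h => h.symm⟩
  ext x
  exact ⟨fun hx => (Relation.ReflTransGen.stdSymm.symm _ _ h).trans hx, h.trans⟩

lemma isUnsaturated_of_notMem_verts (hMH : ↑M ⊆ H.edgeSet) (hx : x ∉ H.verts) :
    IsUnsaturated M x :=
  fun _ he hxe => hx (H.mem_verts_of_mem_edge (hMH he) hxe)

lemma IsEdgeComp.symm (h : IsEdgeComp H a b) : IsEdgeComp H b a := by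
  refine ⟨h.1.symm, ?_⟩
  rw [← hcomp_eq_of_reflTransGen (Relation.ReflTransGen.single h.1), h.2, Set.pair_comm]

lemma IsEdgeComp.right_unique (hb : IsEdgeComp H a b) (hc : IsEdgeComp H a c) : b = c := by
  have hcb : c ∈ ({a, b} : Set V) := by
    rw [← hb.2, hc.2]
    exact Set.mem_insert_of_mem _ rfl
  rcases hcb with rfl | rfl
  · exact absurd rfl hc.1.ne
  · rfl

end Components

section PathComponents

variable {V : Type*} [DecidableEq V] {G : SimpleGraph V} {H : G.Subgraph}
  {M : Finset (Sym2 V)} {p : Fin 5 → V} {a b : V}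

lemma Is5PathComp.hcomp_eq (hp : Is5PathComp H M p) (j : Fin 5) :
    Hcomp H (p j) = Set.range p := by
  have hj : p j ∈ Hcomp H (p 0) := by
    rw [hp.2.2.1]
    exact ⟨j, rfl⟩
  rw [← hcomp_eq_of_reflTransGen hj, hp.2.2.1]

lemma Is5PathComp.mem_verts (hp : Is5PathComp H M p) (j : Fin 5) : p j ∈ H.verts := by
  fin_cases j
  exacts [(hp.2.1 0).fst_mem, (hp.2.1 1).fst_mem, (hp.2.1 2).fst_mem, (hp.2.1 3).fst_mem,
    (hp.2.1 3).snd_mem]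

lemma Is5PathComp.reverse (hp : Is5PathComp H M p) : Is5PathComp H M (p ∘ Fin.rev) := by
  have hcomp4 := hp.hcomp_eq 4
  obtain ⟨hinj, hadj, -, hedges, h01, h34, h12, h23⟩ := hp
  refine ⟨hinj.comp Fin.rev_injective, fun i => ?_, ?_, ?_, ?_, ?_, ?_, ?_⟩
  · simpa only [Function.comp_apply, Fin.rev_castSucc, Fin.rev_succ] using (hadj i.rev).symm
  · rw [Fin.rev_surjective.range_comp]
    exact hcomp4
  · intro u v hu hv huv
    rw [Fin.rev_surjective.range_comp] at hu hv
    obtain ⟨i, hi⟩ := hedges u v hu hv huv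
    refine ⟨i.rev, ?_⟩
    simp only [Function.comp_apply, Fin.rev_castSucc, Fin.rev_succ, Fin.rev_rev]
    tauto
  all_goals simp only [Function.comp_apply]
  · rw [Sym2.eq_swap]; exact h34
  · rw [Sym2.eq_swap]; exact h01
  · rw [Sym2.eq_swap]; exact h23
  · rw [Sym2.eq_swap]; exact h12

lemma Is5PathComp.isUnsaturated_two (hp : Is5PathComp H M p) (hMH : ↑M ⊆ H.edgeSet) :
    IsUnsaturated M (p 2) := by
  intro e he h2e
  obtain ⟨z, rfl⟩ := Sym2.mem_iff_exists.1 h2e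
  have hz : z ∈ Set.range p := by
    rw [← hp.hcomp_eq 2]
    exact Relation.ReflTransGen.single (hMH he)
  obtain ⟨i, hi⟩ := hp.2.2.2.1 _ _ ⟨2, rfl⟩ hz (hMH he)
  fin_cases i <;> rcases hi with ⟨hi, rfl⟩ | ⟨hi, rfl⟩ <;>
    first
    | exact absurd (hp.1 hi) (by decide)
    | exact hp.2.2.2.2.2.2.2 he
    | exact hp.2.2.2.2.2.2.1 (Sym2.eq_swap ▸ he)

lemma IsEdgeComp.notMem_range (hab : IsEdgeComp H a b) (hp : Is5PathComp H M p) :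
    a ∉ Set.range p := by
  rintro ⟨j, rfl⟩
  have hrange : Set.range p = {p j, b} := by rw [← hp.hcomp_eq j, hab.2]
  have hcard := Set.ncard_range_of_injective hp.1
  rw [hrange, Nat.card_eq_fintype_card, Fintype.card_fin] at hcard
  have := Set.ncard_insert_le (p j) {b}
  rw [Set.ncard_singleton] at this
  omega

end PathComponents

section NoAugmentingTriple

variable {V : Type*} [DecidableEq V] {G : SimpleGraph V} {H : G.Subgraph}
  {M : Finset (Sym2 V)} {u v w y : V}

lemma IsEdgeComp.mem_of_components
    (hcomps : ∀ x ∈ H.verts,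
      (∃ a b : V, (x = a ∨ x = b) ∧ IsEdgeComp H a b ∧ s(a, b) ∈ M) ∨
      (∃ p : Fin 5 → V, x ∈ Set.range p ∧ Is5PathComp H M p))
    (hvw : IsEdgeComp H v w) : s(v, w) ∈ M := by
  rcases hcomps v hvw.1.fst_mem with ⟨a, b, rfl | rfl, hab, habM⟩ | ⟨p, hvp, hp⟩
  · rwa [← hab.right_unique hvw]
  · rwa [← hab.symm.right_unique hvw, Sym2.eq_swap]
  · exact absurd hvp (hvw.notMem_range hp)

lemma edgeComp_or_5PathComp_of_notMem_pathInnerVerts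
    (hcomps : ∀ x ∈ H.verts,
      (∃ a b : V, (x = a ∨ x = b) ∧ IsEdgeComp H a b ∧ s(a, b) ∈ M) ∨
      (∃ p : Fin 5 → V, x ∈ Set.range p ∧ Is5PathComp H M p))
    (hy : y ∈ H.verts) (hyI : y ∉ pathInnerVerts H M) :
    (∃ b, IsEdgeComp H y b) ∨ ∃ p, Is5PathComp H M p ∧ (y = p 0 ∨ y = p 2) := by
  rcases hcomps y hy with ⟨a, b, rfl | rfl, hab, -⟩ | ⟨p, ⟨j, rfl⟩, hp⟩
  · exact Or.inl ⟨b, hab⟩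
  · exact Or.inl ⟨a, hab.symm⟩
  · fin_cases j
    · exact Or.inr ⟨p, hp, Or.inl rfl⟩
    · exact absurd ⟨p, hp, Or.inl rfl⟩ hyI
    · exact Or.inr ⟨p, hp, Or.inr rfl⟩
    · exact absurd ⟨p, hp, Or.inr rfl⟩ hyI
    · exact Or.inr ⟨p ∘ Fin.rev, hp.reverse, Or.inl rfl⟩

lemma IsEdgeComp.mem_union_pathInnerVerts_of_adj_outside (hvw : IsEdgeComp H v w)
    (hM : IsMaxMatchingSet G M) (hMH : ↑M ⊆ H.edgeSet)
    (hcomps : ∀ x ∈ H.verts,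
      (∃ a b : V, (x = a ∨ x = b) ∧ IsEdgeComp H a b ∧ s(a, b) ∈ M) ∨
      (∃ p : Fin 5 → V, x ∈ Set.range p ∧ Is5PathComp H M p))
    (hnoaug : ¬ HasAugTriple G H) (hu : u ∉ H.verts)
    (huv : G.Adj u v) (huy : G.Adj u y) : y ∈ ({v, w} : Set V) ∪ pathInnerVerts H M := by
  by_contra hy
  simp only [Set.mem_union, Set.mem_insert_iff, Set.mem_singleton_iff, not_or] at hy
  obtain ⟨⟨hyv, hyw⟩, hyI⟩ := hy
  have hu' := isUnsaturated_of_notMem_verts hMH hu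
  by_cases hyH : y ∈ H.verts
  swap
  · exact hM.not_adj hu' (isUnsaturated_of_notMem_verts hMH hyH) huy
  rcases edgeComp_or_5PathComp_of_notMem_pathInnerVerts hcomps hyH hyI with
    ⟨b, hyb⟩ | ⟨p, hp, rfl | rfl⟩
  · refine hnoaug ⟨u, v, w, y, b, hu, hvw, hyb, fun h => ?_, Or.inl ⟨huv, huy⟩⟩
    rcases Sym2.eq_iff.1 h with ⟨h, -⟩ | ⟨-, h⟩
    exacts [hyv h.symm, hyw h.symm]
  · exact hM.not_augmentingPath₃ hu' (hp.isUnsaturated_two hMH) hp.2.2.2.2.1 huy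
      (hp.2.1 1).adj_sub (ne_of_mem_of_not_mem (hp.mem_verts 2) hu)
  · exact hM.not_adj hu' (hp.isUnsaturated_two hMH) huy

lemma IsEdgeComp.mem_union_pathInnerVerts_of_adj_right (hvw : IsEdgeComp H v w)
    (hM : IsMaxMatchingSet G M) (hMH : ↑M ⊆ H.edgeSet)
    (hcomps : ∀ x ∈ H.verts,
      (∃ a b : V, (x = a ∨ x = b) ∧ IsEdgeComp H a b ∧ s(a, b) ∈ M) ∨
      (∃ p : Fin 5 → V, x ∈ Set.range p ∧ Is5PathComp H M p))
    (hnoaug : ¬ HasAugTriple G H) (hu : u ∉ H.verts)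
    (huv : G.Adj u v) (hwy : G.Adj w y) : y ∈ ({v, u} : Set V) ∪ pathInnerVerts H M := by
  by_contra hy
  simp only [Set.mem_union, Set.mem_insert_iff, Set.mem_singleton_iff, not_or] at hy
  obtain ⟨⟨hyv, hyu⟩, hyI⟩ := hy
  have hu' := isUnsaturated_of_notMem_verts hMH hu
  have hvwM := hvw.mem_of_components hcomps
  by_cases hyH : y ∈ H.verts
  swap
  · exact hM.not_augmentingPath₃ hu' (isUnsaturated_of_notMem_verts hMH hyH) hvwM huv hwy hyu
  rcases edgeComp_or_5PathComp_of_notMem_pathInnerVerts hcomps hyH hyI with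
    ⟨b, hyb⟩ | ⟨p, hp, rfl | rfl⟩
  · refine hnoaug ⟨u, v, w, y, b, hu, hvw, hyb, fun h => ?_, Or.inr ⟨huv, hwy⟩⟩
    rcases Sym2.eq_iff.1 h with ⟨h, -⟩ | ⟨-, h⟩
    exacts [hyv h.symm, hwy.ne h]
  · have hv := hvw.notMem_range hp
    have hne : s(p 0, p 1) ≠ s(v, w) := fun h => by
      rcases Sym2.mem_iff.1 (h ▸ Sym2.mem_mk_left v w) with h | h
      exacts [hv ⟨0, h.symm⟩, hv ⟨1, h.symm⟩]
    exact hM.not_augmentingPath₅ hu' (hp.isUnsaturated_two hMH) hvwM hp.2.2.2.2.1 hne huv hwy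
      (hp.2.1 1).adj_sub (ne_of_mem_of_not_mem (hp.mem_verts 2) hu)
      (fun h => hvw.symm.notMem_range hp ⟨2, h⟩)
  · exact hM.not_augmentingPath₃ hu' (hp.isUnsaturated_two hMH) hvwM huv hwy
      (ne_of_mem_of_not_mem (hp.mem_verts 2) hu)

end NoAugmentingTriple

theorem stmt6_general {V : Type*} [DecidableEq V] (G : SimpleGraph V)
    (M : Finset (Sym2 V)) (hM : IsMaxMatchingSet G M)
    (H : G.Subgraph) (hMH : ↑M ⊆ H.edgeSet)
    (hcomps : ∀ x ∈ H.verts,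
      (∃ a b : V, (x = a ∨ x = b) ∧ IsEdgeComp H a b ∧ s(a, b) ∈ M) ∨
      (∃ p : Fin 5 → V, x ∈ Set.range p ∧ Is5PathComp H M p))
    (hnoaug : ¬ HasAugTriple G H)
    (I : Set V)
    (hI : I = {x | ∃ p : Fin 5 → V, Is5PathComp H M p ∧ (x = p 1 ∨ x = p 3)})
    (v w u : V) (hvw : IsEdgeComp H v w) (hu : u ∉ H.verts) (huv : G.Adj u v) :
    (∀ y : V, G.Adj u y → y ∈ ({v, w} : Set V) ∪ I) ∧
    (∀ y : V, G.Adj w y → y ∈ ({v, u} : Set V) ∪ I) := by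
  subst hI
  exact ⟨fun _ => hvw.mem_union_pathInnerVerts_of_adj_outside hM hMH hcomps hnoaug hu huv,
    fun _ => hvw.mem_union_pathInnerVerts_of_adj_right hM hMH hcomps hnoaug hu huv⟩

/-- if every component of `H` is an `M`-edge or a 5-path with end edges in
`M`, and `H` has no augmenting triple, then for every edge component `{v, w}` of `H` and
every `u ∉ V(H)` with `{u,v} ∈ E(G)`, all neighbors of `u` lie in `{v, w} ∪ I` and all
neighbors of `w` lie in `{v, u} ∪ I`, where `I` is the set of internal non-middle
vertices of the 5-path components of `H`. -/
theorem stmt6 {V : Type*} [Fintype V] [DecidableEq V] (G : SimpleGraph V)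
    (M : Finset (Sym2 V)) (hM : IsMaxMatchingSet G M)
    (H : G.Subgraph) (hMH : ↑M ⊆ H.edgeSet)
    (hcomps : ∀ x ∈ H.verts,
      (∃ a b : V, (x = a ∨ x = b) ∧ IsEdgeComp H a b ∧ s(a, b) ∈ M) ∨
      (∃ p : Fin 5 → V, x ∈ Set.range p ∧ Is5PathComp H M p))
    (hnoaug : ¬ HasAugTriple G H)
    (I : Set V)
    (hI : I = {x | ∃ p : Fin 5 → V, Is5PathComp H M p ∧ (x = p 1 ∨ x = p 3)})
    (v w u : V) (hvw : IsEdgeComp H v w) (hu : u ∉ H.verts) (huv : G.Adj u v) :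
    (∀ y : V, G.Adj u y → y ∈ ({v, w} : Set V) ∪ I) ∧
    (∀ y : V, G.Adj w y → y ∈ ({v, u} : Set V) ∪ I) :=
  stmt6_general G M hM H hMH hcomps hnoaug I hI v w u hvw hu huv
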